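/- Let λ be a non-linear irreducible character of G ≤ S_m. If there exists j with [λ, 1_{G_j}] ≠ 0 such that √2/2 < ‖f^λ_{ij}‖ < 1, then V^λ(G) has no orthogonal basis consisting of standard λ-symmetrized vectors f^λ_{rs}. -/

import Mathlib

open scoped Classical InnerProductSpace ComplexConjugate

noncomputable section

/-- The Cartesian product `×^m V` with the inner product `⟨z,w⟩ = Σ ⟨z_i, w_i⟩`. -/
abbrev CartPow (V : Type*) [NormedAddCommGroup V] [InnerProductSpace ℂ V] (m : ℕ) :=
  PiLp 2 (fun _ : Fin m => V)

/-- The Cartesian permutation operator `Q(τ)(u₁,…,u_m) = (u_{τ⁻¹(1)},…,u_{τ⁻¹(m)})`. -/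
def CartQ (V : Type*) [NormedAddCommGroup V] [InnerProductSpace ℂ V] (m : ℕ)
    (τ : Equiv.Perm (Fin m)) : CartPow V m →ₗ[ℂ] CartPow V m where
  toFun u := WithLp.toLp 2 (fun i => u (τ⁻¹ i))
  map_add' _ _ := by first | rfl | (ext; simp)
  map_smul' _ _ := by first | rfl | (ext; simp)

/-- The Cartesian symmetrizer `C_χ = (χ(1)/|G|) Σ_{τ∈G} χ(τ) Q(τ)`. -/
def cartSym (V : Type*) [NormedAddCommGroup V] [InnerProductSpace ℂ V] (m : ℕ)
    (G : Subgroup (Equiv.Perm (Fin m))) (χ : ↥G → ℂ) :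
    CartPow V m →ₗ[ℂ] CartPow V m :=
  (χ 1 / (Nat.card G : ℂ)) • ∑ τ : G, χ τ • CartQ V m (τ : Equiv.Perm (Fin m))

/-- `χ : H → ℂ` is the character of some irreducible (finite-dimensional, complex)
representation of `H`. -/
def IsIrredChar {H : Type} [Group H] (χ : H → ℂ) : Prop :=
  ∃ W : FDRep ℂ H, CategoryTheory.Simple W ∧ χ = W.character

/-- The standard vectors `f_{ij} = (δ_{1j} f_i, …, δ_{mj} f_i)` in `×^m V`. -/
def stdVec {V : Type*} [NormedAddCommGroup V] [InnerProductSpace ℂ V] {n : ℕ}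
    (f : Fin n → V) (m : ℕ) (i : Fin n) (j : Fin m) : CartPow V m :=
  WithLp.toLp 2 (fun l => if l = j then f i else 0)

/-- `[χ, 1_{G_j}] = (1/|G_j|) Σ_{g ∈ G_j} χ(g)`. -/
def charInnerTriv {m : ℕ} (G : Subgroup (Equiv.Perm (Fin m))) (χ : ↥G → ℂ)
    (j : Fin m) : ℂ :=
  (Nat.card (MulAction.stabilizer G j) : ℂ)⁻¹ * ∑ g : MulAction.stabilizer G j, χ (g : ↥G)

/-- `V^χ(G)` has an orthogonal basis consisting of standard χ-symmetrized vectors. -/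
def HasOBasis (V : Type*) [NormedAddCommGroup V] [InnerProductSpace ℂ V] {n m : ℕ}
    (f : Fin n → V) (G : Subgroup (Equiv.Perm (Fin m))) (χ : ↥G → ℂ) : Prop :=
  ∃ (k : ℕ) (b : Module.Basis (Fin k) ℂ (LinearMap.range (cartSym V m G χ))),
    (∀ p q : Fin k, p ≠ q → ⟪(b p : CartPow V m), (b q : CartPow V m)⟫_ℂ = 0) ∧
    ∀ p, ∃ (r : Fin n) (j : Fin m), (b p : CartPow V m) = cartSym V m G χ (stdVec f m r j)

/-- The Ramanujan sum `c_n(q)`. -/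
def ramanujanSum (n q : ℕ) : ℂ :=
  ∑ s ∈ (Finset.range n).filter (fun s => Nat.gcd s n = 1),
    Complex.exp (2 * Real.pi * Complex.I * q * s / n)

end

/-!
The symmetrizer `C = cartSym V m G χ` is the orthogonal projection onto `V^χ(G)`: this follows
from `χ(g⁻¹) = conj χ(g)` and `χ(1) Σ_g χ(g) χ(g⁻¹π) = |G| χ(π)` (Schur's lemma). It commutes with
the permutation operators `Q(σ)`, `σ ∈ G`, so `t = ‖C f_{il}‖²` only depends on the orbit `G l`,
and `⟪f_{rk}, C f_{il}⟫ = 0` unless `r = i` and `k ∈ G l`.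

Given an O-basis `{C f_{rs}}`, expanding `C f_{il}` (`l ∈ G j`) in it yields
`t² = Σ |⟪f_{rs}, C f_{il}⟫|²` over the indices `(r, s)` of the basis, whereas Parseval yields
`Σ_{(r,s) ≠ (i,l)} |⟪f_{rs}, C f_{il}⟫|² = t - t²`. If the basis misses some `f_{il}` with
`l ∈ G j`, this gives `t ≤ 1/2`; otherwise, at `l = j`, all off-diagonal coordinates vanish and
`t = t²`. Either way `‖C f_{ij}‖ ∉ (√2/2, 1)`.
-/

open Finset
open scoped ComplexOrder

open Matrix in
theorem Matrix.star_trace_eq_trace_inv {ι H : Type*} [Fintype ι] [DecidableEq ι] [Group H]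
    [Fintype H] (M : H →* Matrix ι ι ℂ) (g : H) : star (M g).trace = (M g⁻¹).trace := by
  -- Unitary trick: `Q` is a positive definite form invariant under every `M h`.
  set Q := ∑ h, (M h)ᴴ * M h
  have hQ : Q.PosDef := by
    rw [show Q = _ from (add_sum_erase _ _ (mem_univ (1 : H))).symm, map_one, conjTranspose_one,
      one_mul]
    exact PosDef.one.add_posSemidef
      (posSemidef_sum _ fun h _ => posSemidef_conjTranspose_mul_self (M h))
  have hinv : (M g)ᴴ * Q * M g = Q := by
    simp only [Q, mul_sum, sum_mul]
    refine Fintype.sum_equiv (Equiv.mulRight g) _ _ fun h => ?_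
    simp only [Equiv.coe_mulRight, map_mul, conjTranspose_mul, Matrix.mul_assoc]
  have := hQ.isUnit.invertible
  have hconj : (M g)ᴴ = Q * M g⁻¹ * Q⁻¹ :=
    calc (M g)ᴴ = (M g)ᴴ * Q * Q⁻¹ := by rw [Matrix.mul_assoc, mul_inv_of_invertible, mul_one]
      _ = (M g)ᴴ * Q * (M g * M g⁻¹) * Q⁻¹ := by rw [← map_mul, mul_inv_cancel, map_one, mul_one]
      _ = Q * M g⁻¹ * Q⁻¹ := by rw [← Matrix.mul_assoc, hinv]
  rw [← trace_conjTranspose, hconj, trace_mul_cycle, inv_mul_of_invertible, Matrix.one_mul]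

theorem FDRep.char_inv {G : Type} [Group G] [Fintype G] (V : FDRep ℂ G) (g : G) :
    V.character g⁻¹ = conj (V.character g) := by
  let b := Module.finBasis ℂ V
  let M : G →* Matrix _ _ ℂ := (LinearMap.toMatrixAlgEquiv b).toMonoidHom.comp V.ρ
  have hchar (h : G) : V.character h = (M h).trace := LinearMap.trace_eq_matrix_trace ℂ b (V.ρ h)
  rw [hchar, hchar, ← Matrix.star_trace_eq_trace_inv]
  rfl

theorem commute_sum_smul_of_conj {H R M : Type*} [Group H] [Fintype H] [CommSemiring R]
    [AddCommMonoid M] [Module R M] (ρ : H →* Module.End R M) {χ : H → R}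
    (hχ : ∀ g h, χ (h * g * h⁻¹) = χ g) (h : H) : Commute (∑ g, χ g • ρ g) (ρ h) := by
  simp only [Commute, SemiconjBy, sum_mul, mul_sum, smul_mul_assoc, mul_smul_comm, ← map_mul]
  refine Fintype.sum_equiv (MulAut.conj h⁻¹).toEquiv _ _ fun g => ?_
  simp only [MulEquiv.toEquiv_eq_coe, MulEquiv.coe_toEquiv, MulAut.conj_apply, hχ]
  congr 2
  group

theorem FDRep.exists_sum_char_smul_inv_eq_smul_id {G : Type} [Group G] [Fintype G]
    (V : FDRep ℂ G) [CategoryTheory.Simple V] :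
    ∃ c : ℂ, ∑ g, V.character g⁻¹ • V.ρ g = c • LinearMap.id := by
  set A := ∑ g, V.character g⁻¹ • V.ρ g
  have hcomm (h : G) : A * V.ρ h = V.ρ h * A :=
    commute_sum_smul_of_conj V.ρ
      (fun g h => by rw [show (h * g * h⁻¹)⁻¹ = h * g⁻¹ * h⁻¹ by group, FDRep.char_conj]) h
  let φ : V ⟶ V := ⟨FGModuleCat.ofHom A, fun h => by ext x; exact LinearMap.congr_fun (hcomm h) x⟩
  obtain ⟨c, hc⟩ := CategoryTheory.endomorphism_simple_eq_smul_id ℂ φ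
  exact ⟨c, (congrArg (fun φ : V ⟶ V => φ.hom.hom.hom) hc).symm⟩

theorem FDRep.char_one_mul_sum_char_mul_char_inv_mul {G : Type} [Group G] [Fintype G]
    (V : FDRep ℂ G) [CategoryTheory.Simple V] (π : G) :
    V.character 1 * ∑ g, V.character g * V.character (g⁻¹ * π) =
      Nat.card G * V.character π := by
  obtain ⟨c, hc⟩ := V.exists_sum_char_smul_inv_eq_smul_id
  have : Invertible (Nat.card G : ℂ) := invertibleOfNonzero (Nat.cast_ne_zero.mpr Nat.card_pos.ne')
  have horth := FDRep.char_orthonormal V V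
  rw [if_pos ⟨CategoryTheory.Iso.refl V⟩, inv_mul_eq_one₀ (Invertible.ne_zero _)] at horth
  have htrace (τ : G) : ∑ g, V.character g * V.character (g⁻¹ * τ) = c * V.character τ := by
    have := congrArg (fun A => LinearMap.trace ℂ V (A * V.ρ τ)) hc
    rw [← Fintype.sum_equiv (Equiv.inv G) (fun g => V.character g⁻¹ * V.character (g * τ)) _
      fun g => by simp only [Equiv.inv_apply, inv_inv]]
    simpa [sum_mul, smul_mul_assoc, ← map_mul, ← Module.End.one_eq_id, FDRep.character] using this
  have hc1 : c * V.character 1 = Nat.card G := by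
    rw [horth, ← htrace]
    simp only [mul_one]
  rw [htrace, ← hc1]
  ring

noncomputable def charProj {H E : Type*} [Group H] [Fintype H] [AddCommGroup E] [Module ℂ E]
    (ρ : H →* Module.End ℂ E) (χ : H → ℂ) : Module.End ℂ E :=
  (χ 1 / Nat.card H) • ∑ h, χ h • ρ h

section CharProj

variable {H : Type} {E : Type*} [Group H] [Fintype H]

theorem charProj_mul_self [AddCommGroup E] [Module ℂ E] (ρ : H →* Module.End ℂ E)
    (W : FDRep ℂ H) [CategoryTheory.Simple W] :
    charProj ρ W.character * charProj ρ W.character = charProj ρ W.character := by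
  have hconv (π : H) :
      W.character 1 / Nat.card H * ∑ g, W.character g * W.character (g⁻¹ * π) = W.character π := by
    rw [div_mul_eq_mul_div, FDRep.char_one_mul_sum_char_mul_char_inv_mul,
      mul_div_cancel_left₀ _ (Nat.cast_ne_zero.mpr Nat.card_pos.ne')]
  have hsq : (∑ h, W.character h • ρ h) * (∑ h, W.character h • ρ h) =
      ∑ π, (∑ g, W.character g * W.character (g⁻¹ * π)) • ρ π :=
    calc _ = ∑ g, ∑ h, (W.character g * W.character h) • ρ (g * h) := by
          simp only [sum_mul_sum, smul_mul_smul_comm, map_mul]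
      _ = ∑ g, ∑ π, (W.character g * W.character (g⁻¹ * π)) • ρ π :=
          sum_congr rfl fun g _ => Fintype.sum_equiv (Equiv.mulLeft g) _ _ fun h => by simp
      _ = _ := by simp only [sum_smul]; exact sum_comm
  rw [charProj, smul_mul_smul_comm, hsq]
  simp only [smul_sum, smul_smul, mul_assoc, hconv]

theorem charProj_commute [AddCommGroup E] [Module ℂ E] (ρ : H →* Module.End ℂ E)
    (W : FDRep ℂ H) (h : H) : Commute (charProj ρ W.character) (ρ h) :=
  (commute_sum_smul_of_conj ρ (fun g h => FDRep.char_conj W g h) h).smul_left _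

theorem inner_charProj_left [NormedAddCommGroup E] [InnerProductSpace ℂ E]
    (ρ : H →* Module.End ℂ E) (hρ : ∀ h u v, ⟪ρ h u, v⟫_ℂ = ⟪u, ρ h⁻¹ v⟫_ℂ)
    (W : FDRep ℂ H) (u v : E) :
    ⟪charProj ρ W.character u, v⟫_ℂ = ⟪u, charProj ρ W.character v⟫_ℂ := by
  simp only [charProj, LinearMap.smul_apply, LinearMap.coe_sum, Finset.sum_apply,
    inner_smul_left, inner_smul_right, sum_inner, inner_sum, hρ, map_div₀, map_natCast,
    FDRep.char_one, ← FDRep.char_inv]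
  congr 1
  exact Fintype.sum_equiv (Equiv.inv H) _ _ fun h => by simp

theorem inner_charProj_charProj [NormedAddCommGroup E] [InnerProductSpace ℂ E]
    (ρ : H →* Module.End ℂ E) (hρ : ∀ h u v, ⟪ρ h u, v⟫_ℂ = ⟪u, ρ h⁻¹ v⟫_ℂ)
    (W : FDRep ℂ H) [CategoryTheory.Simple W] (u v : E) :
    ⟪charProj ρ W.character u, charProj ρ W.character v⟫_ℂ =
      ⟪u, charProj ρ W.character v⟫_ℂ := by
  rw [inner_charProj_left ρ hρ, ← Module.End.mul_apply, charProj_mul_self]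

theorem inner_charProj_eq_zero [NormedAddCommGroup E] [InnerProductSpace ℂ E]
    (ρ : H →* Module.End ℂ E) (χ : H → ℂ) {u v : E} (h : ∀ g, ⟪u, ρ g v⟫_ℂ = 0) :
    ⟪u, charProj ρ χ v⟫_ℂ = 0 := by
  simp [charProj, h]

end CharProj

section OrthogonalBasis

variable {𝕜 E ι : Type*} [RCLike 𝕜] [NormedAddCommGroup E] [InnerProductSpace 𝕜 E] [Fintype ι]

theorem Module.Basis.norm_sq_eq_sum_of_pairwise_inner_eq_zero {U : Submodule 𝕜 E}
    (b : Module.Basis ι 𝕜 U) (hb : Pairwise fun p q => ⟪(b p : E), b q⟫_𝕜 = 0) (v : U) :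
    ‖(v : E)‖ ^ 2 = ∑ p, ‖⟪(b p : E), v⟫_𝕜‖ ^ 2 / ‖(b p : E)‖ ^ 2 := by
  have hv : (v : E) = ∑ p, b.repr v p • (b p : E) := by
    have := congrArg Subtype.val (b.sum_repr v)
    simp only [Submodule.coe_sum, Submodule.coe_smul] at this
    exact this.symm
  have hcoeff (p : ι) : ⟪(b p : E), v⟫_𝕜 = b.repr v p * ‖(b p : E)‖ ^ 2 := by
    rw [hv, inner_sum, sum_eq_single p
      (fun q _ hq => by rw [inner_smul_right, hb hq.symm, mul_zero]) (by simp),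
      inner_smul_right, inner_self_eq_norm_sq_to_K]
  have hne (p : ι) : (b p : E) ≠ 0 := by simpa using b.ne_zero p
  rw [← RCLike.ofReal_inj (K := 𝕜), RCLike.ofReal_pow, ← inner_self_eq_norm_sq_to_K]
  nth_rw 1 [hv]
  simp only [sum_inner, inner_smul_left, hcoeff, RCLike.ofReal_sum]
  refine sum_congr rfl fun p _ => ?_
  have ht : ‖(b p : E)‖ ^ 2 ≠ 0 := pow_ne_zero _ (norm_ne_zero_iff.mpr (hne p))
  rw [norm_mul, mul_pow, norm_pow, RCLike.norm_ofReal, abs_norm, sq (‖(b p : E)‖ ^ 2),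
    mul_div_assoc, mul_div_cancel_right₀ _ ht, ← mul_assoc, RCLike.conj_mul]
  push_cast
  ring

end OrthogonalBasis

section OrthogonalProjection

variable {𝕜 E X ι : Type*} [RCLike 𝕜] [NormedAddCommGroup E] [InnerProductSpace 𝕜 E]
  [Fintype X] [Fintype ι] {P : E →ₗ[𝕜] E}

theorem norm_sq_sq_eq_sum_inner_image (hP : ∀ u v, ⟪P u, P v⟫_𝕜 = ⟪u, P v⟫_𝕜)
    (e : OrthonormalBasis X 𝕜 E) (b : Module.Basis ι 𝕜 (LinearMap.range P))
    (hb : Pairwise fun p q => ⟪(b p : E), b q⟫_𝕜 = 0) (s : ι → X)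
    (hbs : ∀ p, (b p : E) = P (e (s p))) {y : X}
    (hy : ∀ x, ⟪e x, P (e y)⟫_𝕜 ≠ 0 → ‖P (e x)‖ = ‖P (e y)‖) :
    (‖P (e y)‖ ^ 2) ^ 2 = ∑ x ∈ univ.image s, ‖⟪e x, P (e y)⟫_𝕜‖ ^ 2 := by
  have hexp := b.norm_sq_eq_sum_of_pairwise_inner_eq_zero hb ⟨P (e y), LinearMap.mem_range_self P _⟩
  simp only [hbs, hP] at hexp
  rw [sum_image fun p _ q _ h => b.injective (Subtype.ext (by rw [hbs, hbs, h]))]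
  rcases eq_or_ne ‖P (e y)‖ 0 with h0 | h0
  · simp [norm_eq_zero.mp h0]
  have hterm (p : ι) : ‖⟪e (s p), P (e y)⟫_𝕜‖ ^ 2 / ‖P (e (s p))‖ ^ 2 =
      ‖⟪e (s p), P (e y)⟫_𝕜‖ ^ 2 / ‖P (e y)‖ ^ 2 := by
    by_cases h : ⟪e (s p), P (e y)⟫_𝕜 = 0
    · simp [h]
    · rw [hy _ h]
  rw [sum_congr rfl fun p _ => hterm p, ← sum_div, eq_div_iff (pow_ne_zero _ h0)] at hexp
  rw [← hexp, sq (‖P (e y)‖ ^ 2)]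

theorem norm_inner_self_apply_eq_norm_sq (hP : ∀ u v, ⟪P u, P v⟫_𝕜 = ⟪u, P v⟫_𝕜) (u : E) :
    ‖⟪u, P u⟫_𝕜‖ = ‖P u‖ ^ 2 := by
  rw [← hP, inner_self_eq_norm_sq_to_K, ← RCLike.ofReal_pow, RCLike.norm_ofReal, abs_sq]

theorem sum_erase_sq_norm_inner_eq (hP : ∀ u v, ⟪P u, P v⟫_𝕜 = ⟪u, P v⟫_𝕜)
    (e : OrthonormalBasis X 𝕜 E) (y : X) :
    ∑ x ∈ univ.erase y, ‖⟪e x, P (e y)⟫_𝕜‖ ^ 2 = ‖P (e y)‖ ^ 2 - (‖P (e y)‖ ^ 2) ^ 2 := by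
  have := e.sum_sq_norm_inner_right (P (e y))
  rw [← add_sum_erase _ _ (mem_univ y), norm_inner_self_apply_eq_norm_sq hP] at this
  linarith

theorem norm_sq_le_half_or_norm_eq_one (hP : ∀ u v, ⟪P u, P v⟫_𝕜 = ⟪u, P v⟫_𝕜)
    (e : OrthonormalBasis X 𝕜 E) (b : Module.Basis ι 𝕜 (LinearMap.range P))
    (hb : Pairwise fun p q => ⟪(b p : E), b q⟫_𝕜 = 0) (s : ι → X)
    (hbs : ∀ p, (b p : E) = P (e (s p))) {Y : Set X} {y₀ : X} (hy₀ : y₀ ∈ Y)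
    (hY : ∀ y ∈ Y, ∀ x, ⟪e x, P (e y)⟫_𝕜 ≠ 0 → x ∈ Y)
    (hYnorm : ∀ y ∈ Y, ‖P (e y)‖ = ‖P (e y₀)‖) :
    ‖P (e y₀)‖ ^ 2 ≤ 1 / 2 ∨ ‖P (e y₀)‖ = 1 := by
  set t := ‖P (e y₀)‖ ^ 2
  set S := univ.image s
  have hoff (y : X) (hy : y ∈ Y) : ∑ x ∈ univ.erase y, ‖⟪e x, P (e y)⟫_𝕜‖ ^ 2 = t - t ^ 2 := by
    rw [sum_erase_sq_norm_inner_eq hP, hYnorm y hy]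
  have hS (y : X) (hy : y ∈ Y) : t ^ 2 = ∑ x ∈ S, ‖⟪e x, P (e y)⟫_𝕜‖ ^ 2 := by
    rw [show t = ‖P (e y)‖ ^ 2 by rw [hYnorm y hy]]
    exact norm_sq_sq_eq_sum_inner_image hP e b hb s hbs fun x hx =>
      (hYnorm x (hY y hy x hx)).trans (hYnorm y hy).symm
  have ht : 0 ≤ t := by positivity
  by_cases hcov : Y ⊆ S
  · -- The expansion of `P (e y₀)` kills its coordinates along `S \ {y₀}`, and the coordinates
    -- off `Y ⊆ S` vanish anyway, so `t = t ^ 2`.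
    have hrest : ∑ x ∈ S.erase y₀, ‖⟪e x, P (e y₀)⟫_𝕜‖ ^ 2 = 0 := by
      have := hS y₀ hy₀
      rw [← add_sum_erase _ _ (hcov hy₀), norm_inner_self_apply_eq_norm_sq hP] at this
      linarith
    have hvanish : ∑ x ∈ univ.erase y₀, ‖⟪e x, P (e y₀)⟫_𝕜‖ ^ 2 = 0 := by
      rw [← hrest]
      refine (sum_subset (erase_subset_erase _ (subset_univ _)) fun x hx hxS => ?_).symm
      have hxS' : x ∉ S := fun h => hxS (mem_erase.mpr ⟨(mem_erase.mp hx).1, h⟩)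
      by_contra hne
      exact hxS' (hcov (hY y₀ hy₀ x fun h => hne (by simp [h])))
    rw [hoff y₀ hy₀] at hvanish
    refine or_iff_not_imp_left.mpr fun hgt =>
      (pow_eq_one_iff_of_nonneg (norm_nonneg _) two_ne_zero).mp ?_
    nlinarith
  · -- A vector `e y` with `y ∈ Y \ S` gives `t ^ 2 ≤ t - t ^ 2`.
    obtain ⟨y, hy, hyS⟩ := Set.not_subset.mp hcov
    have hle : ∑ x ∈ S, ‖⟪e x, P (e y)⟫_𝕜‖ ^ 2 ≤ ∑ x ∈ univ.erase y, ‖⟪e x, P (e y)⟫_𝕜‖ ^ 2 :=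
      sum_le_sum_of_subset_of_nonneg (fun x hx => mem_erase.mpr ⟨fun h => hyS (h ▸ hx),
        mem_univ x⟩) fun _ _ _ => by positivity
    rw [← hS y hy, hoff y hy] at hle
    left
    nlinarith

end OrthogonalProjection

section Cartesian

variable {V : Type*} [NormedAddCommGroup V] [InnerProductSpace ℂ V] {n m : ℕ}

def cartRep (V : Type*) [NormedAddCommGroup V] [InnerProductSpace ℂ V] (m : ℕ)
    (G : Subgroup (Equiv.Perm (Fin m))) : G →* Module.End ℂ (CartPow V m) where
  toFun τ := CartQ V m τ
  map_one' := rfl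
  map_mul' _ _ := rfl

@[simp]
theorem cartRep_apply (G : Subgroup (Equiv.Perm (Fin m))) (τ : G) :
    cartRep V m G τ = CartQ V m τ :=
  rfl

theorem cartSym_eq_charProj (G : Subgroup (Equiv.Perm (Fin m))) (χ : G → ℂ) :
    cartSym V m G χ = charProj (cartRep V m G) χ :=
  rfl

theorem inner_cartQ_left (τ : Equiv.Perm (Fin m)) (u v : CartPow V m) :
    ⟪CartQ V m τ u, v⟫_ℂ = ⟪u, CartQ V m τ⁻¹ v⟫_ℂ := by
  simp only [PiLp.inner_apply]
  exact Fintype.sum_equiv τ⁻¹ _ _ fun l => by simp [CartQ, Equiv.Perm.inv_def]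

theorem cartQ_stdVec (f : Fin n → V) (τ : Equiv.Perm (Fin m)) (r : Fin n) (k : Fin m) :
    CartQ V m τ (stdVec f m r k) = stdVec f m r (τ k) := by
  ext l
  simp [CartQ, stdVec, Equiv.symm_apply_eq]

noncomputable def stdBasis (f : OrthonormalBasis (Fin n) ℂ V) (m : ℕ) :
    OrthonormalBasis ((_ : Fin m) × Fin n) ℂ (CartPow V m) :=
  Pi.orthonormalBasis fun _ => f

theorem stdBasis_apply (f : OrthonormalBasis (Fin n) ℂ V) (k : Fin m) (r : Fin n) :
    stdBasis f m ⟨k, r⟩ = stdVec f m r k := by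
  ext l
  simp [stdBasis, stdVec, Pi.orthonormalBasis_apply]

theorem norm_cartQ (τ : Equiv.Perm (Fin m)) (u : CartPow V m) : ‖CartQ V m τ u‖ = ‖u‖ := by
  rw [@norm_eq_sqrt_re_inner ℂ, @norm_eq_sqrt_re_inner ℂ, inner_cartQ_left]
  congr
  ext l
  simp [CartQ, Equiv.Perm.inv_def]

theorem inner_cartSym_cartSym (G : Subgroup (Equiv.Perm (Fin m))) (W : FDRep ℂ G)
    [CategoryTheory.Simple W] (u v : CartPow V m) :
    ⟪cartSym V m G W.character u, cartSym V m G W.character v⟫_ℂ =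
      ⟪u, cartSym V m G W.character v⟫_ℂ := by
  rw [cartSym_eq_charProj]
  exact inner_charProj_charProj (cartRep V m G) (fun τ => inner_cartQ_left (τ : Equiv.Perm (Fin m)))
    W u v

variable (f : OrthonormalBasis (Fin n) ℂ V) (G : Subgroup (Equiv.Perm (Fin m)))

theorem exists_eq_of_inner_stdBasis_cartSym_ne_zero (χ : G → ℂ) {x : (_ : Fin m) × Fin n}
    {l : Fin m} {i : Fin n}
    (hx : ⟪stdBasis f m x, cartSym V m G χ (stdBasis f m ⟨l, i⟩)⟫_ℂ ≠ 0) :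
    ∃ σ : G, x = ⟨(σ : Equiv.Perm (Fin m)) l, i⟩ := by
  by_contra hne
  rw [cartSym_eq_charProj] at hx
  refine hx (inner_charProj_eq_zero _ _ fun σ => ?_)
  rw [cartRep_apply, stdBasis_apply f l i, cartQ_stdVec, ← stdBasis_apply]
  exact (stdBasis f m).orthonormal.2 fun h => hne ⟨σ, h⟩

theorem norm_cartSym_stdBasis_apply (W : FDRep ℂ G) (σ : G) (l : Fin m) (i : Fin n) :
    ‖cartSym V m G W.character (stdBasis f m ⟨(σ : Equiv.Perm (Fin m)) l, i⟩)‖ =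
      ‖cartSym V m G W.character (stdBasis f m ⟨l, i⟩)‖ := by
  rw [stdBasis_apply, stdBasis_apply, ← cartQ_stdVec, cartSym_eq_charProj,
    ← cartRep_apply, ← Module.End.mul_apply, (charProj_commute (cartRep V m G) W σ).eq]
  exact norm_cartQ _ _

end Cartesian

theorem no_OBasis_of_norm_between_general
    (V : Type*) [NormedAddCommGroup V] [InnerProductSpace ℂ V]
    {n m : ℕ} (f : OrthonormalBasis (Fin n) ℂ V)
    (G : Subgroup (Equiv.Perm (Fin m))) (χ : ↥G → ℂ)
    (hχ : ∃ W : FDRep ℂ ↥G, CategoryTheory.Simple W ∧ χ = W.character ∧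
      1 < Module.finrank ℂ W)
    (i : Fin n) (j : Fin m)
    (h1 : Real.sqrt 2 / 2 < ‖cartSym V m G χ (stdVec ⇑f m i j)‖)
    (h2 : ‖cartSym V m G χ (stdVec ⇑f m i j)‖ < 1) :
    ¬ HasOBasis V ⇑f G χ := by
  rintro ⟨k, b, hb, hform⟩
  obtain ⟨W, hW, rfl, -⟩ := hχ
  choose r l hbs using hform
  simp only [← stdBasis_apply] at h1 h2 hbs
  set Y := Set.range fun σ : G => (⟨(σ : Equiv.Perm (Fin m)) j, i⟩ : (_ : Fin m) × Fin n)
  have hY : ∀ y ∈ Y, ∀ x,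
      ⟪stdBasis f m x, cartSym V m G W.character (stdBasis f m y)⟫_ℂ ≠ 0 → x ∈ Y := by
    rintro _ ⟨σ, rfl⟩ x hx
    obtain ⟨τ, rfl⟩ := exists_eq_of_inner_stdBasis_cartSym_ne_zero f G _ hx
    exact ⟨τ * σ, rfl⟩
  have hYnorm : ∀ y ∈ Y, ‖cartSym V m G W.character (stdBasis f m y)‖ =
      ‖cartSym V m G W.character (stdBasis f m ⟨j, i⟩)‖ := by
    rintro _ ⟨σ, rfl⟩
    exact norm_cartSym_stdBasis_apply f G W σ j i
  rcases norm_sq_le_half_or_norm_eq_one (inner_cartSym_cartSym G W) (stdBasis f m) b hb (fun p => ⟨l p, r p⟩) hbs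
    (Y := Y) (y₀ := ⟨j, i⟩) ⟨1, rfl⟩ hY hYnorm with h | h
  · have : (Real.sqrt 2 / 2) ^ 2 = 1 / 2 := by rw [div_pow, Real.sq_sqrt zero_le_two]; norm_num
    nlinarith [Real.sqrt_nonneg 2]
  · linarith

/-- if `χ` is a non-linear irreducible character of `G` and there is `j`
with `[χ, 1_{G_j}] ≠ 0` and `√2/2 < ‖f^χ_{ij}‖ < 1`, then `V^χ(G)` has no `O`-basis. -/
theorem no_OBasis_of_norm_between
    (V : Type*) [NormedAddCommGroup V] [InnerProductSpace ℂ V] [FiniteDimensional ℂ V]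
    {n m : ℕ} (f : OrthonormalBasis (Fin n) ℂ V)
    (G : Subgroup (Equiv.Perm (Fin m))) (χ : ↥G → ℂ)
    (hχ : ∃ W : FDRep ℂ ↥G, CategoryTheory.Simple W ∧ χ = W.character ∧
      1 < Module.finrank ℂ W)
    (i : Fin n) (j : Fin m) (hj : charInnerTriv G χ j ≠ 0)
    (h1 : Real.sqrt 2 / 2 < ‖cartSym V m G χ (stdVec ⇑f m i j)‖)
    (h2 : ‖cartSym V m G χ (stdVec ⇑f m i j)‖ < 1) :
    ¬ HasOBasis V ⇑f G χ :=
  no_OBasis_of_norm_between_general V f G χ hχ i j h1 h2
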